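/- With the group boundaries, truncation points, indices, constants, exponential cdf, and function g_tT as in the context, assume additionally that t < c_l (so A_1 > 0), that H*(θ) ≠ 0 for every θ > 0, and that g_tT is strictly increasing on (0, ∞). Then for every real number μ̂ satisfying u_l/A_1 < μ̂ < [u_l (c_{l-1} - c_l) + Σ_{i=l+1}^{r} v_i (c_{i-1} - c_i) + z_r (c_r - c_{r+1})] / [A_1 c_{l-1} + B_1 c_l - A_2 c_r - B_2 c_{r+1}], the equation g_tT(θ) = μ̂ has exactly one solution θ in (0, ∞). -/

import Mathlib

/-!
Both `N*` and `H*` are linear combinations of the exponentials `exp (-c j / θ)`, so `g_tT` is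
continuous on `(0, ∞)` wherever `H*` does not vanish. Multiplying numerator and denominator by
`exp (c (l-1) / θ)` leaves only the terms in `exp (-c (l-1) / θ)` in the limit `θ → 0⁺`, which
gives `g_tT → u_l / A_1`. Multiplying them by `-θ` and using `θ (1 - exp (-a / θ)) → a` as
`θ → ∞` gives the upper bound as the limit at infinity. The intermediate value theorem then
yields a solution, and strict monotonicity makes it unique.
-/

open Filter Real Topology Set

lemma tendsto_exp_neg_div_nhdsGT_zero {a : ℝ} (ha : 0 < a) :
    Tendsto (fun θ : ℝ => exp (-a / θ)) (𝓝[>] 0) (𝓝 0) := by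
  simp only [div_eq_mul_inv, tendsto_exp_comp_nhds_zero]
  exact tendsto_inv_nhdsGT_zero.const_mul_atTop_of_neg (neg_lt_zero.2 ha)

lemma tendsto_mul_one_sub_exp_neg_div_atTop (a : ℝ) :
    Tendsto (fun θ : ℝ => θ * (1 - exp (-a / θ))) atTop (𝓝 a) := by
  have hderiv : HasDerivAt (fun x : ℝ => -exp (-a * x)) a 0 := by
    simpa using ((hasDerivAt_id (0 : ℝ)).const_mul (-a)).exp.fun_neg
  refine (hderiv.tendsto_slope_zero_right.comp tendsto_inv_atTop_nhdsGT_zero).congr fun θ => ?_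
  simp only [Function.comp_apply, smul_eq_mul, inv_inv, zero_add, mul_zero, exp_zero,
    div_eq_mul_inv]
  ring

theorem existsUnique_eq_of_injOn_of_tendsto {α δ : Type*} [ConditionallyCompleteLinearOrder α]
    [TopologicalSpace α] [OrderTopology α] [DenselyOrdered α] [NoMaxOrder α]
    [LinearOrder δ] [TopologicalSpace δ] [OrderClosedTopology δ]
    {f : α → δ} {a : α} {L M y : δ} (hinj : InjOn f (Ioi a)) (hf : ContinuousOn f (Ioi a))
    (hL : Tendsto f (𝓝[>] a) (𝓝 L)) (hM : Tendsto f atTop (𝓝 M)) (hLy : L < y) (hyM : y < M) :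
    ∃! x, x ∈ Ioi a ∧ f x = y := by
  obtain ⟨x₁, hfx₁, hx₁⟩ := ((hL.eventually_lt_const hLy).and self_mem_nhdsWithin).exists
  obtain ⟨x₂, hfx₂, hx₂⟩ := ((hM.eventually_const_lt hyM).and (eventually_gt_atTop a)).exists
  obtain ⟨x, hx, hfx⟩ := hf.surjOn_Icc hx₁ hx₂ ⟨hfx₁.le, hfx₂.le⟩
  exact ⟨x, ⟨hx, hfx⟩, fun x' ⟨hx', hfx'⟩ => hinj hx' hx (hfx'.trans hfx.symm)⟩

lemma tendsto_mul_of_tendsto_mul_groupProb {F : Filter ℝ} {l r : ℕ} (hlr : l ≤ r + 1)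
    {uₗ z_r : ℝ} {v : ℕ → ℝ} {Pr : ℕ → ℝ → ℝ} {N : ℝ → ℝ}
    (hN : ∀ θ, N θ = uₗ * Pr l θ + (∑ i ∈ Finset.Icc (l + 1) r, v i * Pr i θ)
      + z_r * Pr (r + 1) θ)
    (s : ℝ → ℝ) (L : ℕ → ℝ)
    (hPr : ∀ j, l ≤ j → j ≤ r + 1 → Tendsto (fun θ => s θ * Pr j θ) F (𝓝 (L j))) :
    Tendsto (fun θ => s θ * N θ) F
      (𝓝 (uₗ * L l + (∑ i ∈ Finset.Icc (l + 1) r, v i * L i) + z_r * L (r + 1))) := by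
  have := (((hPr l le_rfl hlr).const_mul uₗ).add
    (tendsto_finsetSum (Finset.Icc (l + 1) r) fun i hi =>
      (hPr i (by grind) (by grind)).const_mul (v i))).add
    ((hPr (r + 1) hlr le_rfl).const_mul z_r)
  refine this.congr fun θ => ?_
  simp only [hN, mul_add, Finset.mul_sum, mul_left_comm (s θ)]

section GroupedExponential

variable {c : ℕ → ℝ} {l r : ℕ} {A₁ B₁ A₂ B₂ uₗ z_r : ℝ} {v : ℕ → ℝ} {p Pr : ℕ → ℝ → ℝ}
  {N H : ℝ → ℝ}
  (hp : ∀ j θ, p j θ = 1 - exp (-(c j) / θ)) (hPr : ∀ j θ, Pr j θ = p j θ - p (j - 1) θ)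
  (hN : ∀ θ, N θ = uₗ * Pr l θ + (∑ i ∈ Finset.Icc (l + 1) r, v i * Pr i θ) + z_r * Pr (r + 1) θ)
  (hH : ∀ θ, H θ = A₂ * p r θ + B₂ * p (r + 1) θ - A₁ * p (l - 1) θ - B₁ * p l θ)
include hp hPr hN hH

lemma tendsto_ratio_atTop (hlr : l ≤ r + 1)
    (hden : A₁ * c (l - 1) + B₁ * c l - A₂ * c r - B₂ * c (r + 1) ≠ 0) :
    Tendsto (fun θ => N θ / H θ) atTop
      (𝓝 ((uₗ * (c (l - 1) - c l) + (∑ i ∈ Finset.Icc (l + 1) r, v i * (c (i - 1) - c i))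
          + z_r * (c r - c (r + 1)))
        / (A₁ * c (l - 1) + B₁ * c l - A₂ * c r - B₂ * c (r + 1)))) := by
  -- scaling by `-θ` (not `θ`) produces the numerator and denominator exactly as written
  have hp' (j : ℕ) : Tendsto (fun θ => -θ * p j θ) atTop (𝓝 (-c j)) := by
    simpa only [hp, neg_mul] using (tendsto_mul_one_sub_exp_neg_div_atTop (c j)).neg
  have hNlim := tendsto_mul_of_tendsto_mul_groupProb hlr hN (fun θ => -θ)
    (fun j => c (j - 1) - c j) fun j _ _ => by
      simpa only [hPr, mul_sub, neg_sub_neg] using (hp' j).sub (hp' (j - 1))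
  simp only [Nat.add_sub_cancel] at hNlim
  have hHlim : Tendsto (fun θ => -θ * H θ) atTop
      (𝓝 (A₁ * c (l - 1) + B₁ * c l - A₂ * c r - B₂ * c (r + 1))) := by
    have := ((((hp' r).const_mul A₂).add ((hp' (r + 1)).const_mul B₂)).sub
      ((hp' (l - 1)).const_mul A₁)).sub ((hp' l).const_mul B₁)
    rw [show A₂ * -c r + B₂ * -c (r + 1) - A₁ * -c (l - 1) - B₁ * -c l
        = A₁ * c (l - 1) + B₁ * c l - A₂ * c r - B₂ * c (r + 1) by ring] at this
    exact this.congr fun θ => by rw [hH]; ring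
  refine (hNlim.div hHlim hden).congr' ?_
  filter_upwards [eventually_gt_atTop 0] with θ hθ
  exact mul_div_mul_left _ _ (neg_ne_zero.2 hθ.ne')

lemma tendsto_ratio_nhdsGT_zero (hlr : l ≤ r) (hc : ∀ j, l ≤ j → j ≤ r + 1 → c (l - 1) < c j)
    (hA₁ : A₁ ≠ 0) (hAB₁ : A₁ + B₁ = 1) (hAB₂ : A₂ + B₂ = 1) :
    Tendsto (fun θ => N θ / H θ) (𝓝[>] 0) (𝓝 (uₗ / A₁)) := by
  have hsurv_base (θ : ℝ) : exp (c (l - 1) / θ) * (1 - p (l - 1) θ) = 1 := by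
    rw [hp, sub_sub_cancel, ← exp_add, neg_div, add_neg_cancel, exp_zero]
  have hsurv_lim (j : ℕ) (hlj : l ≤ j) (hjr : j ≤ r + 1) :
      Tendsto (fun θ => exp (c (l - 1) / θ) * (1 - p j θ)) (𝓝[>] 0) (𝓝 0) := by
    refine (tendsto_exp_neg_div_nhdsGT_zero (sub_pos.2 (hc j hlj hjr))).congr fun θ => ?_
    rw [hp, sub_sub_cancel, ← exp_add]
    congr 1
    ring
  have hPr_lim (j : ℕ) (hlj : l ≤ j) (hjr : j ≤ r + 1) :
      Tendsto (fun θ => exp (c (l - 1) / θ) * Pr j θ) (𝓝[>] 0)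
        (𝓝 (if j = l then 1 else 0)) := by
    have hPr' (θ : ℝ) : exp (c (l - 1) / θ) * Pr j θ
        = exp (c (l - 1) / θ) * (1 - p (j - 1) θ) - exp (c (l - 1) / θ) * (1 - p j θ) := by
      rw [hPr]; ring
    simp_rw [hPr']
    split_ifs with hjl
    · subst hjl
      simpa only [hsurv_base, sub_zero] using (hsurv_lim j le_rfl hjr).const_sub 1
    · simpa only [sub_zero] using (hsurv_lim (j - 1) (by omega) (by omega)).sub (hsurv_lim j hlj hjr)
  have hNlim := tendsto_mul_of_tendsto_mul_groupProb (F := 𝓝[>] 0) (by omega) hN _ _ hPr_lim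
  have hl_notMem : l ∉ Finset.Icc (l + 1) r := by simp
  simp only [if_pos, mul_ite, mul_one, mul_zero, Finset.sum_ite_eq', if_neg hl_notMem,
    if_neg (show r + 1 ≠ l by omega), add_zero] at hNlim
  have hHlim : Tendsto (fun θ => exp (c (l - 1) / θ) * H θ) (𝓝[>] 0) (𝓝 A₁) := by
    have := ((((tendsto_const_nhds (x := A₁)).add ((hsurv_lim l le_rfl (by omega)).const_mul B₁)).sub
      ((hsurv_lim r hlr (by omega)).const_mul A₂)).sub ((hsurv_lim (r + 1) (by omega) le_rfl).const_mul B₂))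
    simp only [mul_zero, add_zero, sub_zero] at this
    refine this.congr fun θ => ?_
    rw [hH]
    linear_combination (-A₁) * hsurv_base θ + exp (c (l - 1) / θ) * (hAB₁ - hAB₂)
  exact (hNlim.div hHlim hA₁).congr fun θ => mul_div_mul_left _ _ (exp_ne_zero _)

lemma continuousOn_ratio (hHne : ∀ θ, 0 < θ → H θ ≠ 0) :
    ContinuousOn (fun θ => N θ / H θ) (Ioi 0) := by
  have hpc (j : ℕ) : ContinuousOn (p j) (Ioi 0) :=
    ContinuousOn.congr (by fun_prop (disch := exact fun θ hθ => ne_of_gt hθ)) fun θ _ => hp j θ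
  have hPrc (j : ℕ) : ContinuousOn (Pr j) (Ioi 0) :=
    ContinuousOn.congr (by fun_prop) fun θ _ => hPr j θ
  have hNc : ContinuousOn N (Ioi 0) := ContinuousOn.congr (by fun_prop) fun θ _ => hN θ
  have hHc : ContinuousOn H (Ioi 0) := ContinuousOn.congr (by fun_prop) fun θ _ => hH θ
  exact hNc.div hHc hHne

end GroupedExponential

theorem stmt6_general
    (m : ℕ) (c : ℕ → ℝ)
    (hcmono : ∀ j, j < m → c j < c (j + 1))
    (l r : ℕ) (hl : 1 ≤ l) (hlr : l ≤ r) (hrm : r + 1 ≤ m)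
    (t T : ℝ) (hT1 : c r < T)
    (A₁ B₁ A₂ B₂ uₗ z_r : ℝ) (v : ℕ → ℝ)
    (hA₁ : A₁ = (c l - t) / (c l - c (l - 1)))
    (hB₁ : B₁ = (t - c (l - 1)) / (c l - c (l - 1)))
    (hA₂ : A₂ = (c (r + 1) - T) / (c (r + 1) - c r))
    (hB₂ : B₂ = (T - c r) / (c (r + 1) - c r))
    -- the exponential cdf at the group boundaries and the group probabilities
    (p : ℕ → ℝ → ℝ) (hp : ∀ j θ, p j θ = 1 - Real.exp (-(c j) / θ))
    (Pr : ℕ → ℝ → ℝ) (hPr : ∀ j θ, Pr j θ = p j θ - p (j - 1) θ)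
    (Nstar Hstar g : ℝ → ℝ)
    (hN : ∀ θ, Nstar θ = uₗ * Pr l θ + (∑ i ∈ Finset.Icc (l + 1) r, v i * Pr i θ)
      + z_r * Pr (r + 1) θ)
    (hH : ∀ θ, Hstar θ = A₂ * p r θ + B₂ * p (r + 1) θ - A₁ * p (l - 1) θ - B₁ * p l θ)
    (hg : ∀ θ, g θ = Nstar θ / Hstar θ)
    (htl : t < c l)
    (hHne : ∀ θ : ℝ, 0 < θ → Hstar θ ≠ 0)
    (hmono : StrictMonoOn g (Set.Ioi (0 : ℝ))) :
    ∀ μHat : ℝ,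
      uₗ / A₁ < μHat →
      μHat < (uₗ * (c (l - 1) - c l) + (∑ i ∈ Finset.Icc (l + 1) r, v i * (c (i - 1) - c i))
          + z_r * (c r - c (r + 1)))
        / (A₁ * c (l - 1) + B₁ * c l - A₂ * c r - B₂ * c (r + 1)) →
      ∃! θ : ℝ, θ ∈ Set.Ioi (0 : ℝ) ∧ g θ = μHat := by
  intro μHat hlow hhigh
  have hc : StrictMonoOn c (Iic m) := strictMonoOn_Iic_of_lt_succ hcmono
  have hc_lt (i j : ℕ) (hij : i < j) (hjm : j ≤ m) : c i < c j :=
    hc (show i ≤ m by omega) hjm hij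
  have hcl := hc_lt (l - 1) l (by omega) (by omega)
  have hwidth₁ : c l - c (l - 1) ≠ 0 := (sub_pos.2 hcl).ne'
  have hwidth₂ : c (r + 1) - c r ≠ 0 := (sub_pos.2 (hc_lt r (r + 1) (by omega) hrm)).ne'
  have hAB₁ : A₁ + B₁ = 1 := by rw [hA₁, hB₁]; field_simp; ring
  have hAB₂ : A₂ + B₂ = 1 := by rw [hA₂, hB₂]; field_simp; ring
  have hA₁_pos : 0 < A₁ := by rw [hA₁]; exact div_pos (sub_pos.2 htl) (sub_pos.2 hcl)
  have htT : t < T := (htl.trans_le (hc.monotoneOn (by simp; omega) (by simp; omega) hlr)).trans hT1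
  have hden : A₁ * c (l - 1) + B₁ * c l - A₂ * c r - B₂ * c (r + 1) = t - T := by
    rw [hA₁, hB₁, hA₂, hB₂]; field_simp; ring
  rw [show g = fun θ => Nstar θ / Hstar θ from funext hg] at hmono ⊢
  exact existsUnique_eq_of_injOn_of_tendsto hmono.injOn (continuousOn_ratio hp hPr hN hH hHne)
    (tendsto_ratio_nhdsGT_zero hp hPr hN hH hlr
      (fun j hlj hjr => hc_lt _ _ (by omega) (by omega)) hA₁_pos.ne' hAB₁ hAB₂)
    (tendsto_ratio_atTop hp hPr hN hH (by omega) (by rw [hden]; exact (sub_neg.2 htT).ne))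
    hlow hhigh

/-- Unique solvability of the MTuM estimating equation `g_{tT}(θ) = μ̂`:
assuming `g_{tT}` is strictly increasing on `(0, ∞)` (the paper's Conjecture 1),
`H* ≠ 0` on `(0, ∞)`, and `t < c_l`, for every `μ̂` strictly between the two
limiting values of `g_{tT}` there is exactly one `θ ∈ (0, ∞)` with `g_{tT}(θ) = μ̂`. -/
theorem stmt6
    (m : ℕ) (c : ℕ → ℝ) (hc0 : c 0 = 0)
    (hcmono : ∀ j, j < m → c j < c (j + 1))
    (l r : ℕ) (hl : 1 ≤ l) (hlr : l ≤ r) (hrm : r + 1 ≤ m)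
    (t T : ℝ) (ht1 : c (l - 1) < t) (ht2 : t ≤ c l) (hT1 : c r < T) (hT2 : T ≤ c (r + 1))
    (A₁ B₁ A₂ B₂ uₗ z_r : ℝ) (v : ℕ → ℝ)
    (hA₁ : A₁ = (c l - t) / (c l - c (l - 1)))
    (hB₁ : B₁ = (t - c (l - 1)) / (c l - c (l - 1)))
    (hA₂ : A₂ = (c (r + 1) - T) / (c (r + 1) - c r))
    (hB₂ : B₂ = (T - c r) / (c (r + 1) - c r))
    (huₗ : uₗ = (c l ^ 2 - t ^ 2) / (2 * (c l - c (l - 1))))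
    (hv : ∀ i, v i = (c i + c (i - 1)) / 2)
    (hz : z_r = (T ^ 2 - c r ^ 2) / (2 * (c (r + 1) - c r)))
    -- the exponential cdf at the group boundaries and the group probabilities
    (p : ℕ → ℝ → ℝ) (hp : ∀ j θ, p j θ = 1 - Real.exp (-(c j) / θ))
    (Pr : ℕ → ℝ → ℝ) (hPr : ∀ j θ, Pr j θ = p j θ - p (j - 1) θ)
    (Nstar Hstar g : ℝ → ℝ)
    (hN : ∀ θ, Nstar θ = uₗ * Pr l θ + (∑ i ∈ Finset.Icc (l + 1) r, v i * Pr i θ)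
      + z_r * Pr (r + 1) θ)
    (hH : ∀ θ, Hstar θ = A₂ * p r θ + B₂ * p (r + 1) θ - A₁ * p (l - 1) θ - B₁ * p l θ)
    (hg : ∀ θ, g θ = Nstar θ / Hstar θ)
    (htl : t < c l)
    (hHne : ∀ θ : ℝ, 0 < θ → Hstar θ ≠ 0)
    (hmono : StrictMonoOn g (Set.Ioi (0 : ℝ))) :
    ∀ μHat : ℝ,
      uₗ / A₁ < μHat →
      μHat < (uₗ * (c (l - 1) - c l) + (∑ i ∈ Finset.Icc (l + 1) r, v i * (c (i - 1) - c i))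
          + z_r * (c r - c (r + 1)))
        / (A₁ * c (l - 1) + B₁ * c l - A₂ * c r - B₂ * c (r + 1)) →
      ∃! θ : ℝ, θ ∈ Set.Ioi (0 : ℝ) ∧ g θ = μHat :=
  stmt6_general m c hcmono l r hl hlr hrm t T hT1 A₁ B₁ A₂ B₂ uₗ z_r v hA₁ hB₁ hA₂ hB₂ p hp Pr hPr
    Nstar Hstar g hN hH hg htl hHne hmono
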